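/- arXiv:2003.10335 — 4 statements merged into one kernel-verified Lean document; each statement's English description precedes it below -/
import Mathlib

section
/- Let A1 := A^{(1)}[(5,6,7)→(2,3,4)], A2 := A^{(2)}[(1,6,7)→(5,3,4)], A3 := A^{(3)}[(1,2,7)→(5,6,4)], A4 := A^{(4)}[(1,2,3)→(5,6,7)], A5 := A^{(5)}[(1,6,7)→(2,3,4)], A6 := A^{(6)}[(1,2,7)→(5,3,4)], A7 := A^{(7)}[(1,2,3)→(5,6,4)]. For a 3×3 matrix M and distinct positions r<s<t in {1,…,6}, let M_{rst} denote the 6×6 matrix over F that acts as M on the coordinates (r,s,t) (in that order) and as the identity on the remaining three coordinates. Then the heptagon relation holds: (A1)_{123} · (A2)_{145} · (A3)_{246} · (A4)_{356} = (A7)_{356} · (A6)_{245} · (A5)_{123} as 6×6 matrices over F. -/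
/-- The determinant `d_{ijk}` built from the columns `(α_i,β_i,γ_i)`, `(α_j,β_j,γ_j)`,
`(α_k,β_k,γ_k)`. -/
noncomputable def dd {F : Type*} [Field F] (al be ga : Fin 7 → F) (i j k : Fin 7) : F :=
  Matrix.det !![al i, al j, al k; be i, be j, be k; ga i, ga j, ga k]

/-- The ansatz matrix `A^{(p)}[(i₁,i₂,i₃)→(o₁,o₂,o₃)]`: its `(a,b)` entry is
`d_{j,o_b,p}·d_{k,o_b,p}/(d_{i_a,j,p}·d_{i_a,k,p})` where `{j,k}` are the two inputs
other than `i_a` (chosen cyclically; the expression is symmetric in `j,k`). -/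
noncomputable def ansatz {F : Type*} [Field F] (al be ga : Fin 7 → F) (p : Fin 7)
    (inp out : Fin 3 → Fin 7) : Matrix (Fin 3) (Fin 3) F := fun a b =>
  dd al be ga (inp (a + 1)) (out b) p * dd al be ga (inp (a + 2)) (out b) p /
    (dd al be ga (inp a) (inp (a + 1)) p * dd al be ga (inp a) (inp (a + 2)) p)

/-- `embed3 p0 p1 p2 M` is the 6×6 matrix acting as the 3×3 matrix `M` on the
(distinct) coordinates `(p0,p1,p2)` (in that order) and as the identity on the
remaining coordinates. -/
noncomputable def embed3 {F : Type*} [Field F] (p0 p1 p2 : Fin 6)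
    (M : Matrix (Fin 3) (Fin 3) F) : Matrix (Fin 6) (Fin 6) F := fun r c =>
  if r = p0 then (if c = p0 then M 0 0 else if c = p1 then M 0 1 else if c = p2 then M 0 2 else 0)
  else if r = p1 then
    (if c = p0 then M 1 0 else if c = p1 then M 1 1 else if c = p2 then M 1 2 else 0)
  else if r = p2 then
    (if c = p0 then M 2 0 else if c = p1 then M 2 1 else if c = p2 then M 2 2 else 0)
  else if r = c then 1 else 0

/-!
Fix a point `p`. For points `c₁, c₂` the map `u ↦ d(c₁,u,p)·d(c₂,u,p)` is a quadratic form in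
the image of `u` under projection from `p`, and the entries of `A^{(p)}` are the Lagrange weights
that interpolate such forms from the three inputs to the three outputs (this is where the
Plücker relation enters). So if a row vector lists the values `d(c₁,u,v)·d(c₂,u,v)` on six lines
`uv`, and the lines at the three positions acted on are the lines from `p` to the inputs, then
multiplying by `A^{(p)}` yields the same kind of vector with those lines replaced by the lines from
`p` to the outputs. Both sides of the relation move the same six lines to the same six lines, and
for a suitable choice of six pairs `(c₁, c₂)` these vectors are the rows of an invertible matrix.
-/

open Matrix

theorem quadratic_interpolation_of_plucker {V F : Type*} [Field F] (e : V → V → F)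
    (he_anti : ∀ a b, e b a = -e a b)
    (he_plucker : ∀ a b c d, e a b * e c d - e a c * e b d + e a d * e b c = 0)
    (x : Fin 3 → V) (hx : ∀ a b, a ≠ b → e (x a) (x b) ≠ 0) (c₁ c₂ o : V) :
    ∑ a, e c₁ (x a) * e c₂ (x a) *
        (e (x (a + 1)) o * e (x (a + 2)) o / (e (x a) (x (a + 1)) * e (x a) (x (a + 2)))) =
      e c₁ o * e c₂ o := by
  have h₀₁ := hx 0 1 (by decide)
  have h₀₂ := hx 0 2 (by decide)
  have h₁₂ := hx 1 2 (by decide)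
  simp only [Fin.sum_univ_three, Fin.isValue, Fin.reduceAdd, zero_add]
  set x₀ := x 0
  set y := x 1
  set z := x 2
  rw [he_anti x₀ y, he_anti x₀ z, he_anti y z]
  field_simp
  linear_combination
    -(e y z * e c₂ o * e x₀ z) * he_plucker c₁ x₀ y o
    - e y z * (e c₁ y * e x₀ o - e c₁ x₀ * e y o) * he_plucker c₂ x₀ z o
    + e x₀ o * e c₂ z * e y o * he_plucker c₁ x₀ y z
    - e x₀ o * e c₁ y * e c₂ z * he_plucker x₀ y z o
    + e x₀ o * e c₁ y * e z o * he_plucker c₂ x₀ y z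

section Embed3

variable {F : Type*} [Field F] (w : Fin 6 → F) (M : Matrix (Fin 3) (Fin 3) F)

theorem vecMul_embed3_apply_of_ne {q₀ q₁ q₂ s : Fin 6} (h₀ : s ≠ q₀) (h₁ : s ≠ q₁)
    (h₂ : s ≠ q₂) : (w ᵥ* embed3 q₀ q₁ q₂ M) s = w s := by
  rw [vecMul, dotProduct, Finset.sum_eq_single s]
  · simp [embed3, h₀, h₁, h₂]
  · intro r _ hr
    simp [embed3, h₀, h₁, h₂, hr]
  · simp

theorem vecMul_embed3_apply {q₀ q₁ q₂ : Fin 6} (h₀₁ : q₀ ≠ q₁) (h₀₂ : q₀ ≠ q₂)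
    (h₁₂ : q₁ ≠ q₂) (b : Fin 3) :
    (w ᵥ* embed3 q₀ q₁ q₂ M) (![q₀, q₁, q₂] b) = ∑ a, w (![q₀, q₁, q₂] a) * M a b := by
  have hcol : ∀ r, embed3 q₀ q₁ q₂ M r (![q₀, q₁, q₂] b) =
      ∑ a, if r = ![q₀, q₁, q₂] a then M a b else 0 := by
    intro r
    fin_cases b <;> by_cases hr₀ : r = q₀ <;> by_cases hr₁ : r = q₁ <;> by_cases hr₂ : r = q₂ <;>
      simp_all [embed3, Fin.sum_univ_three, eq_comm]
  simp only [vecMul, dotProduct, hcol, Finset.mul_sum, mul_ite, mul_zero]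
  rw [Finset.sum_comm]
  simp

end Embed3

section Heptagon

variable {F : Type*} [Field F] (al be ga : Fin 7 → F)

theorem dd_swap_left (i j k : Fin 7) : dd al be ga j i k = -dd al be ga i j k := by
  simp [dd, det_fin_three]
  ring

theorem dd_swap_right (i j k : Fin 7) : dd al be ga i k j = -dd al be ga i j k := by
  simp [dd, det_fin_three]
  ring

theorem dd_self_left (i k : Fin 7) : dd al be ga i i k = 0 := by
  simp [dd, det_fin_three]

theorem dd_self_outer (i j : Fin 7) : dd al be ga i j i = 0 := by
  simp [dd, det_fin_three]

theorem dd_plucker (p a b c d : Fin 7) :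
    dd al be ga a b p * dd al be ga c d p - dd al be ga a c p * dd al be ga b d p
      + dd al be ga a d p * dd al be ga b c p = 0 := by
  simp [dd, det_fin_three]
  ring

theorem sum_mul_ansatz (p : Fin 7) (inp out : Fin 3 → Fin 7)
    (hinp : ∀ a b, a ≠ b → dd al be ga (inp a) (inp b) p ≠ 0) (c₁ c₂ : Fin 7) (b : Fin 3) :
    ∑ a, dd al be ga c₁ (inp a) p * dd al be ga c₂ (inp a) p * ansatz al be ga p inp out a b =
      dd al be ga c₁ (out b) p * dd al be ga c₂ (out b) p :=
  quadratic_interpolation_of_plucker (fun i j => dd al be ga i j p)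
    (fun i j => dd_swap_left al be ga i j p) (dd_plucker al be ga p) inp hinp c₁ c₂ (out b)

noncomputable def lineValue (c₁ c₂ : Fin 7) : Sym2 (Fin 7) → F :=
  Sym2.lift ⟨fun u v => dd al be ga c₁ u v * dd al be ga c₂ u v, fun u v => by
    simp only [dd_swap_right al be ga _ v u, neg_mul_neg]⟩

theorem lineValue_eq_zero {c₁ c₂ : Fin 7} {l : Sym2 (Fin 7)} (h : c₁ ∈ l ∨ c₂ ∈ l) :
    lineValue al be ga c₁ c₂ l = 0 := by
  induction l using Sym2.ind with
  | h u v =>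
    rcases h with h | h <;> rcases Sym2.mem_iff.mp h with rfl | rfl <;>
      simp [lineValue, dd_self_left, dd_self_outer]

theorem lineValue_ne_zero
    (hgen : ∀ i j k : Fin 7, i ≠ j → i ≠ k → j ≠ k → dd al be ga i j k ≠ 0)
    {c₁ c₂ u v : Fin 7} (huv : u ≠ v) (h₁ : c₁ ∉ s(u, v)) (h₂ : c₂ ∉ s(u, v)) :
    lineValue al be ga c₁ c₂ s(u, v) ≠ 0 := by
  simp only [Sym2.mem_iff, not_or] at h₁ h₂
  exact mul_ne_zero (hgen _ _ _ h₁.1 h₁.2 huv) (hgen _ _ _ h₂.1 h₂.2 huv)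

noncomputable def lineValueMatrix {ι κ : Type*} (pairs : ι → Fin 7 × Fin 7)
    (lines : κ → Sym2 (Fin 7)) : Matrix ι κ F :=
  of fun t s => lineValue al be ga (pairs t).1 (pairs t).2 (lines s)

def moveLines (lines : Fin 6 → Sym2 (Fin 7)) (q₀ q₁ q₂ : Fin 6) (p : Fin 7)
    (out : Fin 3 → Fin 7) : Fin 6 → Sym2 (Fin 7) :=
  Function.update (Function.update (Function.update lines q₀ s(out 0, p)) q₁ s(out 1, p))
    q₂ s(out 2, p)

theorem moveLines_apply_of_ne {lines : Fin 6 → Sym2 (Fin 7)} {q₀ q₁ q₂ s : Fin 6}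
    (h₀ : s ≠ q₀) (h₁ : s ≠ q₁) (h₂ : s ≠ q₂) (p : Fin 7) (out : Fin 3 → Fin 7) :
    moveLines lines q₀ q₁ q₂ p out s = lines s := by
  simp only [moveLines, Function.update_of_ne h₀, Function.update_of_ne h₁,
    Function.update_of_ne h₂]

theorem moveLines_apply {lines : Fin 6 → Sym2 (Fin 7)} {q₀ q₁ q₂ : Fin 6} (h₀₁ : q₀ ≠ q₁)
    (h₀₂ : q₀ ≠ q₂) (h₁₂ : q₁ ≠ q₂) (p : Fin 7) (out : Fin 3 → Fin 7) (b : Fin 3) :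
    moveLines lines q₀ q₁ q₂ p out (![q₀, q₁, q₂] b) = s(out b, p) := by
  fin_cases b <;> simp [moveLines, Function.update_of_ne, h₀₁, h₀₂, h₁₂]

theorem lineValueMatrix_mul_embed3_ansatz
    (hgen : ∀ i j k : Fin 7, i ≠ j → i ≠ k → j ≠ k → dd al be ga i j k ≠ 0)
    {ι : Type*} (pairs : ι → Fin 7 × Fin 7) (lines : Fin 6 → Sym2 (Fin 7)) {q₀ q₁ q₂ : Fin 6}
    (h₀₁ : q₀ ≠ q₁) (h₀₂ : q₀ ≠ q₂) (h₁₂ : q₁ ≠ q₂) {p : Fin 7} {inp : Fin 3 → Fin 7}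
    (out : Fin 3 → Fin 7) (hinp : Function.Injective inp) (hp : ∀ a, inp a ≠ p)
    (hlines : ∀ a, lines (![q₀, q₁, q₂] a) = s(inp a, p)) :
    lineValueMatrix al be ga pairs lines * embed3 q₀ q₁ q₂ (ansatz al be ga p inp out) =
      lineValueMatrix al be ga pairs (moveLines lines q₀ q₁ q₂ p out) := by
  funext t s
  rw [mul_apply_eq_vecMul]
  by_cases hs : ∃ b, s = ![q₀, q₁, q₂] b
  · obtain ⟨b, rfl⟩ := hs
    have hnd : ∀ a b, a ≠ b → dd al be ga (inp a) (inp b) p ≠ 0 := fun a b hab =>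
      hgen _ _ _ (hinp.ne hab) (hp a) (hp b)
    rw [vecMul_embed3_apply _ _ h₀₁ h₀₂ h₁₂]
    simpa only [lineValueMatrix, of_apply, hlines, moveLines_apply h₀₁ h₀₂ h₁₂, lineValue,
      Sym2.lift_mk] using sum_mul_ansatz al be ga p inp out hnd (pairs t).1 (pairs t).2 b
  · simp only [not_exists] at hs
    have h₀ : s ≠ q₀ := hs 0
    have h₁ : s ≠ q₁ := hs 1
    have h₂ : s ≠ q₂ := hs 2
    rw [vecMul_embed3_apply_of_ne _ _ h₀ h₁ h₂]
    simp only [lineValueMatrix, of_apply, moveLines_apply_of_ne h₀ h₁ h₂]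

def heptagonLines : Fin 6 → Sym2 (Fin 7) :=
  ![s(4, 0), s(5, 0), s(0, 6), s(5, 1), s(1, 6), s(2, 6)]

/-- Each pair meets every line of `heptagonLines` listed before its own position, and not its own
line, so `lineValueMatrix` is upper triangular with nonzero diagonal. -/
def heptagonPairs : Fin 6 → Fin 7 × Fin 7 :=
  ![(5, 6), (4, 6), (4, 5), (0, 3), (0, 5), (0, 1)]

theorem isUnit_lineValueMatrix_heptagon
    (hgen : ∀ i j k : Fin 7, i ≠ j → i ≠ k → j ≠ k → dd al be ga i j k ≠ 0) :
    IsUnit (lineValueMatrix al be ga heptagonPairs heptagonLines) := by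
  have htri : (lineValueMatrix al be ga heptagonPairs heptagonLines).IsUpperTriangular := by
    intro t s hst
    apply lineValue_eq_zero
    revert t s
    decide
  rw [isUnit_iff_isUnit_det, det_of_isUpperTriangular htri, isUnit_iff_ne_zero,
    Finset.prod_ne_zero_iff]
  intro t _
  fin_cases t <;> exact lineValue_ne_zero al be ga hgen (by decide) (by decide) (by decide)

end Heptagon

/-- Vertices `1,…,7` are encoded as `0,…,6 : Fin 7`, positions `1,…,6` as `0,…,5 : Fin 6`. -/
theorem heptagon_relation {F : Type*} [Field F] (al be ga : Fin 7 → F)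
    (hgen : ∀ i j k : Fin 7, i ≠ j → i ≠ k → j ≠ k → dd al be ga i j k ≠ 0) :
    embed3 0 1 2 (ansatz al be ga 0 ![4, 5, 6] ![1, 2, 3]) *
      embed3 0 3 4 (ansatz al be ga 1 ![0, 5, 6] ![4, 2, 3]) *
      embed3 1 3 5 (ansatz al be ga 2 ![0, 1, 6] ![4, 5, 3]) *
      embed3 2 4 5 (ansatz al be ga 3 ![0, 1, 2] ![4, 5, 6]) =
    embed3 2 4 5 (ansatz al be ga 6 ![0, 1, 2] ![4, 5, 3]) *
      embed3 1 3 4 (ansatz al be ga 5 ![0, 1, 6] ![4, 2, 3]) *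
      embed3 0 1 2 (ansatz al be ga 4 ![0, 5, 6] ![1, 2, 3]) := by
  have step := lineValueMatrix_mul_embed3_ansatz al be ga hgen heptagonPairs
  refine (isUnit_lineValueMatrix_heptagon al be ga hgen).mul_left_cancel ?_
  simp only [← Matrix.mul_assoc]
  rw [step, step, step, step, step, step, step]
  -- both sides end with the same six lines; the other goals are the side conditions of the steps
  · exact congrArg _ (by decide)
  all_goals decide
end

section
/- Let B1 := B^{(1)}[(4,5)→(2,3)], B2 := B^{(2)}[(1,5)→(4,3)], B3 := B^{(3)}[(1,2)→(4,5)], B4 := B^{(4)}[(1,5)→(2,3)], B5 := B^{(5)}[(1,2)→(4,3)]. For a 2×2 matrix M and distinct positions r<s in {1,2,3}, let M_{rs} denote the 3×3 matrix over F that acts as M on coordinates (r,s) (in that order) and as the identity on the remaining coordinate. Then the pentagon relation holds: (B1)_{12} · (B2)_{13} · (B3)_{23} = (B5)_{23} · (B4)_{12} as 3×3 matrices over F. -/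
/-- The determinant `d_{ijk}` built from the columns `(α_i,β_i,γ_i)`, `(α_j,β_j,γ_j)`,
`(α_k,β_k,γ_k)`, for indices in `{1,…,5}`. -/
noncomputable def dd5 {F : Type*} [Field F] (al be ga : Fin 5 → F) (i j k : Fin 5) : F :=
  Matrix.det !![al i, al j, al k; be i, be j, be k; ga i, ga j, ga k]

/-- The pentagon ansatz matrix `B^{(p)}[(i₁,i₂)→(o₁,o₂)]`: its `(a,b)` entry is
`d_{j,o_b,p}/d_{i_a,j,p}` where `j` is the input other than `i_a`. -/
noncomputable def ansatzP {F : Type*} [Field F] (al be ga : Fin 5 → F) (p : Fin 5)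
    (inp out : Fin 2 → Fin 5) : Matrix (Fin 2) (Fin 2) F := fun a b =>
  dd5 al be ga (inp (a + 1)) (out b) p / dd5 al be ga (inp a) (inp (a + 1)) p

/-- `embed2 p0 p1 M` is the 3×3 matrix acting as the 2×2 matrix `M` on the (distinct)
coordinates `(p0,p1)` (in that order) and as the identity on the remaining coordinate. -/
noncomputable def embed2 {F : Type*} [Field F] (p0 p1 : Fin 3)
    (M : Matrix (Fin 2) (Fin 2) F) : Matrix (Fin 3) (Fin 3) F := fun r c =>
  if r = p0 then (if c = p0 then M 0 0 else if c = p1 then M 0 1 else 0)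
  else if r = p1 then (if c = p0 then M 1 0 else if c = p1 then M 1 1 else 0)
  else if r = c then 1 else 0

/-!
Once antisymmetry is used to sort the indices of every minor, both sides are explicit
3×3 matrices whose entries are ratios of the ten minors `d_{ijk}` with `0 ≤ i < j < k ≤ 4`.
After clearing the denominators `d_{012}`, `d_{014}`, `d_{034}`, the entries agree either
identically or modulo the three-term Grassmann–Plücker relations
`d_{abc} d_{ade} - d_{abd} d_{ace} + d_{abe} d_{acd} = 0` among the 3×3 minors of a 3×5 matrix.
-/

section Minors

variable {F : Type*} [Field F] (al be ga : Fin 5 → F)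

lemma dd5_eq (i j k : Fin 5) :
    dd5 al be ga i j k = al i * be j * ga k - al i * be k * ga j - al j * be i * ga k
      + al j * be k * ga i + al k * be i * ga j - al k * be j * ga i := by
  simp [dd5, Matrix.det_fin_three]

lemma dd5_swap₁₂ (i j k : Fin 5) : dd5 al be ga j i k = -dd5 al be ga i j k := by
  simp only [dd5_eq]; ring

lemma dd5_swap₂₃ (i j k : Fin 5) : dd5 al be ga i k j = -dd5 al be ga i j k := by
  simp only [dd5_eq]; ring

/- The order hypotheses orient the swaps, so that `simp` with these two lemmas sorts the
indices of a minor instead of looping. -/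
lemma dd5_swap₁₂_of_lt {i j : Fin 5} (k : Fin 5) (_ : j < i) :
    dd5 al be ga i j k = -dd5 al be ga j i k :=
  dd5_swap₁₂ al be ga j i k

lemma dd5_swap₂₃_of_lt (i : Fin 5) {j k : Fin 5} (_ : k < j) :
    dd5 al be ga i j k = -dd5 al be ga i k j :=
  dd5_swap₂₃ al be ga i k j

lemma dd5_plucker (a b c d e : Fin 5) :
    dd5 al be ga a b c * dd5 al be ga a d e - dd5 al be ga a b d * dd5 al be ga a c e
      + dd5 al be ga a b e * dd5 al be ga a c d = 0 := by
  simp only [dd5_eq]; ring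

lemma ansatzP_eq_fin_two (p i₁ i₂ o₁ o₂ : Fin 5) :
    ansatzP al be ga p ![i₁, i₂] ![o₁, o₂] =
      !![dd5 al be ga i₂ o₁ p / dd5 al be ga i₁ i₂ p, dd5 al be ga i₂ o₂ p / dd5 al be ga i₁ i₂ p;
         dd5 al be ga i₁ o₁ p / dd5 al be ga i₂ i₁ p, dd5 al be ga i₁ o₂ p / dd5 al be ga i₂ i₁ p] := by
  ext a b; fin_cases a <;> fin_cases b <;> rfl

end Minors

section Embeddings

variable {F : Type*} [Field F] (M : Matrix (Fin 2) (Fin 2) F)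

lemma embed2_zero_one : embed2 0 1 M = !![M 0 0, M 0 1, 0; M 1 0, M 1 1, 0; 0, 0, 1] := by
  ext r c; fin_cases r <;> fin_cases c <;> rfl

lemma embed2_zero_two : embed2 0 2 M = !![M 0 0, 0, M 0 1; 0, 1, 0; M 1 0, 0, M 1 1] := by
  ext r c; fin_cases r <;> fin_cases c <;> rfl

lemma embed2_one_two : embed2 1 2 M = !![1, 0, 0; 0, M 0 0, M 0 1; 0, M 1 0, M 1 1] := by
  ext r c; fin_cases r <;> fin_cases c <;> rfl

end Embeddings

/-- Vertices `1,…,5` are encoded as `0,…,4 : Fin 5`, positions `1,2,3` as `0,1,2 : Fin 3`. -/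
theorem pentagon_relation {F : Type*} [Field F] (al be ga : Fin 5 → F)
    (hgen : ∀ i j k : Fin 5, i ≠ j → i ≠ k → j ≠ k → dd5 al be ga i j k ≠ 0) :
    embed2 0 1 (ansatzP al be ga 0 ![3, 4] ![1, 2]) *
      embed2 0 2 (ansatzP al be ga 1 ![0, 4] ![3, 2]) *
      embed2 1 2 (ansatzP al be ga 2 ![0, 1] ![3, 4]) =
    embed2 1 2 (ansatzP al be ga 4 ![0, 1] ![3, 2]) *
      embed2 0 1 (ansatzP al be ga 3 ![0, 4] ![1, 2]) := by
  have h012 := hgen 0 1 2 (by decide) (by decide) (by decide)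
  have h014 := hgen 0 1 4 (by decide) (by decide) (by decide)
  have h034 := hgen 0 3 4 (by decide) (by decide) (by decide)
  have plucker₀ := dd5_plucker al be ga 0 1 2 3 4
  have plucker₁ := dd5_plucker al be ga 1 0 2 3 4
  have plucker₂ := dd5_plucker al be ga 2 0 1 3 4
  simp only [embed2_zero_one, embed2_zero_two, embed2_one_two, ansatzP_eq_fin_two,
    Matrix.mul_fin_three]
  simp (disch := decide) only [dd5_swap₁₂_of_lt, dd5_swap₂₃_of_lt, neg_neg, neg_mul, mul_neg,
    neg_div, div_neg] at plucker₁ plucker₂ ⊢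
  ext r c
  fin_cases r <;> fin_cases c <;>
    simp only [Fin.isValue, Fin.zero_eta, Fin.mk_one, Fin.reduceFinMk, Matrix.of_apply,
      Matrix.cons_val', Matrix.cons_val, Matrix.cons_val_fin_one, mul_zero, zero_mul, add_zero,
      zero_add, mul_one, one_mul] <;> field_simp
  · linear_combination plucker₂
  · ring
  · linear_combination dd5 al be ga 0 2 3 * plucker₁
  · linear_combination -dd5 al be ga 1 2 4 * plucker₀
end

section
/- For any five pairwise distinct indices i,j,k,l,m ∈ {1,…,7}, the four edge vectors attached to the edges at vertex i inside the pentachoron {i,j,k,l,m} satisfy the linear dependence d_{klm}·e_{ij} − d_{jlm}·e_{ik} + d_{jkm}·e_{il} − d_{jkl}·e_{im} = 0, as an identity of F-valued functions on the 5-element subsets of {1,…,7} (equivalently, as vectors in F^{21}). -/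
/-- The edge vector `e_{ab}` evaluated at a (5-element) subset `u ⊆ {1,…,7}`:
`d_{a,s,t}·d_{b,s,t}` if `a, b ∈ u`, where `{s,t}` is the complement of `u`
(extracted as the sorted list of `uᶜ`), and `0` otherwise. -/
noncomputable def eVec {F : Type*} [Field F] (al be ga : Fin 7 → F) (a b : Fin 7)
    (u : Finset (Fin 7)) : F :=
  if a ∈ u ∧ b ∈ u then
    dd al be ga a ((uᶜ.sort (· ≤ ·)).getD 0 a) ((uᶜ.sort (· ≤ ·)).getD 1 a) *
      dd al be ga b ((uᶜ.sort (· ≤ ·)).getD 0 a) ((uᶜ.sort (· ≤ ·)).getD 1 a)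
  else 0

lemma dd_dup_left {F : Type*} [Field F] (al be ga : Fin 7 → F) (a c : Fin 7) :
    dd al be ga a a c = 0 := by
  simp [dd, Matrix.det_fin_three]

lemma dd_dup_right {F : Type*} [Field F] (al be ga : Fin 7 → F) (a c : Fin 7) :
    dd al be ga a c a = 0 := by
  simp [dd, Matrix.det_fin_three]

lemma dd_cramer {F : Type*} [Field F] (al be ga : Fin 7 → F) (i j k l m s t : Fin 7) :
    dd al be ga k l m * (dd al be ga i s t * dd al be ga j s t) -
      dd al be ga j l m * (dd al be ga i s t * dd al be ga k s t) +
      dd al be ga j k m * (dd al be ga i s t * dd al be ga l s t) -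
      dd al be ga j k l * (dd al be ga i s t * dd al be ga m s t) = 0 := by
  simp only [dd, Matrix.det_fin_three]
  simp
  ring

/-- For pairwise distinct `i,j,k,l,m`, the four edge vectors attached to the edges at
vertex `i` inside the pentachoron `{i,j,k,l,m}` satisfy the linear dependence
`d_{klm}·e_{ij} − d_{jlm}·e_{ik} + d_{jkm}·e_{il} − d_{jkl}·e_{im} = 0` as functions on
the 5-element subsets of `{1,…,7}` (i.e. as vectors in `F^{21}`). -/
theorem edgeVectors_linear_dependence {F : Type*} [Field F] (al be ga : Fin 7 → F)
    (i j k l m : Fin 7)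
    (hdist : ([i, j, k, l, m] : List (Fin 7)).Pairwise (· ≠ ·)) :
    ∀ u : {u : Finset (Fin 7) // u.card = 5},
      dd al be ga k l m * eVec al be ga i j u.1 -
        dd al be ga j l m * eVec al be ga i k u.1 +
        dd al be ga j k m * eVec al be ga i l u.1 -
        dd al be ga j k l * eVec al be ga i m u.1 = 0 := by
  intro ⟨u, hu⟩
  by_cases hi : i ∈ u
  · have hc : uᶜ.card = 2 := by
      have := Finset.card_compl u
      simp only [Fintype.card_fin, hu] at this
      omega
    have hlen : (uᶜ.sort (· ≤ ·)).length = 2 := by rw [Finset.length_sort, hc]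
    obtain ⟨s, t, hL⟩ : ∃ s t, uᶜ.sort (· ≤ ·) = [s, t] := by
      match h : uᶜ.sort (· ≤ ·), hlen with
      | [s, t], _ => exact ⟨s, t, rfl⟩
    have key : ∀ b : Fin 7, eVec al be ga i b u = dd al be ga i s t * dd al be ga b s t := by
      intro b
      by_cases hb : b ∈ u
      · simp [eVec, hi, hb, hL]
      · have hbc : b ∈ uᶜ.sort (· ≤ ·) := (Finset.mem_sort _).mpr (Finset.mem_compl.mpr hb)
        rw [hL] at hbc
        simp only [List.mem_cons, List.mem_singleton, List.not_mem_nil, or_false] at hbc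
        have hzero : dd al be ga b s t = 0 := by
          rcases hbc with h | h <;> subst h
          · exact dd_dup_left al be ga _ _
          · exact dd_dup_right al be ga _ _
        simp [eVec, hb, hzero]
    rw [key j, key k, key l, key m]
    exact dd_cramer al be ga i j k l m s t
  · simp [eVec, hi]
end

section
/- Let A1 := A^{(1)}[(5,6,7)→(2,3,4)], A2 := A^{(2)}[(1,6,7)→(5,3,4)], A3 := A^{(3)}[(1,2,7)→(5,6,4)]. Set u₁ := d_{415}·d_{715}, u₂ := d_{416}·d_{716}, u₄ := d_{426}·d_{726}, v₁ := d_{412}·d_{712}, v₂ := d_{413}·d_{713}, v₄ := d_{423}·d_{723}, w₁ := d_{425}·d_{725}, w₂ := d_{435}·d_{735}, w₄ := d_{436}·d_{736} (the components of the edge vector e_{47}). Then these nine scalars are not all zero and satisfy the three compatibility relations (u₁, u₂, 0)·A1 = (v₁, v₂, 0), (v₁, u₄, 0)·A2 = (w₁, v₄, 0), and (v₂, v₄, 0)·A3 = (w₂, w₄, 0). -/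
namespace dd

variable {F : Type*} [Field F] (al be ga : Fin 7 → F)

theorem swap_left (a b p : Fin 7) : dd al be ga b a p = -dd al be ga a b p := by
  simp [dd, Matrix.det_fin_three]
  ring

theorem self_left (a p : Fin 7) : dd al be ga a a p = 0 := by
  simp [dd, Matrix.det_fin_three]

theorem mul_swap_right (a c p b : Fin 7) :
    dd al be ga a p b * dd al be ga c p b = dd al be ga a b p * dd al be ga c b p := by
  simp [dd, Matrix.det_fin_three]
  ring

theorem plucker (a b c d p : Fin 7) :
    dd al be ga a b p * dd al be ga c d p - dd al be ga a c p * dd al be ga b d p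
      + dd al be ga a d p * dd al be ga b c p = 0 := by
  simp [dd, Matrix.det_fin_three]
  ring

theorem quadratic_interpolation {t s x y o p : Fin 7} (hxy : dd al be ga x y p ≠ 0)
    (hxs : dd al be ga x s p ≠ 0) (hys : dd al be ga y s p ≠ 0) :
    dd al be ga t x p * dd al be ga s x p *
        (dd al be ga y o p * dd al be ga s o p / (dd al be ga x y p * dd al be ga x s p)) +
      dd al be ga t y p * dd al be ga s y p *
        (dd al be ga s o p * dd al be ga x o p / (dd al be ga y s p * dd al be ga y x p)) =
      dd al be ga t o p * dd al be ga s o p := by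
  rw [swap_left al be ga x s, swap_left al be ga y s, swap_left al be ga x y]
  field_simp
  linear_combination -dd al be ga s o p * plucker al be ga t x y o p

end dd

theorem vecMul_ansatz_quadratic {F : Type*} [Field F] (al be ga : Fin 7 → F)
    {p t s x y : Fin 7}
    (hxy : dd al be ga x y p ≠ 0) (hxs : dd al be ga x s p ≠ 0) (hys : dd al be ga y s p ≠ 0)
    (o₁ o₂ o₃ : Fin 7) :
    Matrix.vecMul ![dd al be ga t x p * dd al be ga s x p, dd al be ga t y p * dd al be ga s y p, 0]
        (ansatz al be ga p ![x, y, s] ![o₁, o₂, o₃]) =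
      ![dd al be ga t o₁ p * dd al be ga s o₁ p, dd al be ga t o₂ p * dd al be ga s o₂ p,
        dd al be ga t o₃ p * dd al be ga s o₃ p] := by
  ext b
  fin_cases b <;>
    simp only [Matrix.vecMul, dotProduct, ansatz, Fin.isValue, Fin.zero_eta, Fin.mk_one,
      Fin.reduceFinMk, Fin.sum_univ_three, Fin.reduceAdd, Matrix.cons_val, Matrix.cons_val_zero,
      Matrix.cons_val_one, zero_add, zero_mul, add_zero] <;>
    exact dd.quadratic_interpolation al be ga hxy hxs hys

/-- Vertices `1,…,7` are encoded as `0,…,6 : Fin 7`. -/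
theorem edgeVector_e47_compatibility {F : Type*} [Field F] (al be ga : Fin 7 → F)
    (hgen : ∀ i j k : Fin 7, i ≠ j → i ≠ k → j ≠ k → dd al be ga i j k ≠ 0) :
    ¬ (dd al be ga 3 0 4 * dd al be ga 6 0 4 = 0 ∧
       dd al be ga 3 0 5 * dd al be ga 6 0 5 = 0 ∧
       dd al be ga 3 1 5 * dd al be ga 6 1 5 = 0 ∧
       dd al be ga 3 0 1 * dd al be ga 6 0 1 = 0 ∧
       dd al be ga 3 0 2 * dd al be ga 6 0 2 = 0 ∧
       dd al be ga 3 1 2 * dd al be ga 6 1 2 = 0 ∧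
       dd al be ga 3 1 4 * dd al be ga 6 1 4 = 0 ∧
       dd al be ga 3 2 4 * dd al be ga 6 2 4 = 0 ∧
       dd al be ga 3 2 5 * dd al be ga 6 2 5 = 0) ∧
    Matrix.vecMul
        ![dd al be ga 3 0 4 * dd al be ga 6 0 4, dd al be ga 3 0 5 * dd al be ga 6 0 5, 0]
        (ansatz al be ga 0 ![4, 5, 6] ![1, 2, 3]) =
      ![dd al be ga 3 0 1 * dd al be ga 6 0 1, dd al be ga 3 0 2 * dd al be ga 6 0 2, 0] ∧
    Matrix.vecMul
        ![dd al be ga 3 0 1 * dd al be ga 6 0 1, dd al be ga 3 1 5 * dd al be ga 6 1 5, 0]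
        (ansatz al be ga 1 ![0, 5, 6] ![4, 2, 3]) =
      ![dd al be ga 3 1 4 * dd al be ga 6 1 4, dd al be ga 3 1 2 * dd al be ga 6 1 2, 0] ∧
    Matrix.vecMul
        ![dd al be ga 3 0 2 * dd al be ga 6 0 2, dd al be ga 3 1 2 * dd al be ga 6 1 2, 0]
        (ansatz al be ga 2 ![0, 1, 6] ![4, 5, 3]) =
      ![dd al be ga 3 2 4 * dd al be ga 6 2 4, dd al be ga 3 2 5 * dd al be ga 6 2 5, 0] := by
  have nz (i j k : Fin 7) (h : [i, j, k].Nodup) : dd al be ga i j k ≠ 0 := by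
    simp only [List.nodup_cons, List.mem_cons, List.not_mem_nil] at h
    exact hgen i j k (by tauto) (by tauto) (by tauto)
  refine ⟨fun h => mul_ne_zero (nz 3 0 4 (by decide)) (nz 6 0 4 (by decide)) h.1, ?_, ?_, ?_⟩
  -- `simp` uses the permutation lemma `dd.mul_swap_right` to put `p` in one slot on both sides.
  · convert vecMul_ansatz_quadratic al be ga (t := 3) (s := 6)
      (nz 4 5 0 (by decide)) (nz 4 6 0 (by decide)) (nz 5 6 0 (by decide)) 1 2 3 using 2 <;>
      simp [dd.mul_swap_right, dd.self_left]
  · convert vecMul_ansatz_quadratic al be ga (t := 3) (s := 6)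
      (nz 0 5 1 (by decide)) (nz 0 6 1 (by decide)) (nz 5 6 1 (by decide)) 4 2 3 using 2 <;>
      simp [dd.mul_swap_right, dd.self_left]
  · convert vecMul_ansatz_quadratic al be ga (t := 3) (s := 6)
      (nz 0 1 2 (by decide)) (nz 0 6 2 (by decide)) (nz 1 6 2 (by decide)) 4 5 3 using 2 <;>
      simp [dd.mul_swap_right, dd.self_left]
end
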